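/- Let G be a connected weighted graph with weights in (0,1), and let C* = {C_1,...,C_k} be a k-clustering of G minimizing the maximum cluster quality Φ (as defined via outgoing edges and maximum spanning trees). Then for every cluster C ∈ C* with |C| > 1 and every bipartition {A, A'} of C into nonempty parts, there exists a maximum spanning tree of G containing an edge with one endpoint in A and the other in A'. -/

import Mathlib

open scoped Classical
noncomputable section

namespace Bal

variable {V : Type*}

/-- Total weight of the edges of a graph. -/
def totalWeight {α : Type*} [Fintype α] (H : SimpleGraph α) (w : Sym2 α → ℝ) : ℝ :=
  ∑ e : Sym2 α, if e ∈ H.edgeSet then w e else 0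

/-- `T` is a maximum spanning tree of `G` w.r.t. the weight `w`. -/
def IsMaxSpanTree {α : Type*} [Fintype α] (G T : SimpleGraph α) (w : Sym2 α → ℝ) : Prop :=
  T ≤ G ∧ T.IsTree ∧
    ∀ T' : SimpleGraph α, T' ≤ G → T'.IsTree → totalWeight T' w ≤ totalWeight T w

/-- Weight function on the induced subgraph on `C`. -/
def subWeight (w : Sym2 V → ℝ) (C : Set V) : Sym2 C → ℝ :=
  fun e => w (e.map Subtype.val)

/-- Edges of `G` with exactly one endpoint in `C`. -/
def outEdges (G : SimpleGraph V) (C : Set V) : Set (Sym2 V) :=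
  {e | e ∈ G.edgeSet ∧ ∃ a b, e = s(a, b) ∧ a ∈ C ∧ b ∉ C}

/-- Edges of `G` with both endpoints in `C`. -/
def inEdges (G : SimpleGraph V) (C : Set V) : Set (Sym2 V) :=
  {e | e ∈ G.edgeSet ∧ ∀ x ∈ e, x ∈ C}

/-- `max(Out(C))`, with the convention `sSup ∅ = 0`. -/
def maxOut (G : SimpleGraph V) (w : Sym2 V → ℝ) (C : Set V) : ℝ :=
  sSup (w '' outEdges G C)

/-- `min(E(C))`, with the convention that it is `1` for singletons. -/
def minIn (G : SimpleGraph V) (w : Sym2 V → ℝ) (C : Set V) : ℝ :=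
  if C.Subsingleton then 1 else sInf (w '' inEdges G C)

/-- `min(MST(C))` : minimum weight of an edge of a maximum spanning tree of `G[C]`,
with the convention that it is `1` for singletons. -/
def minMST [Fintype V] (G : SimpleGraph V) (w : Sym2 V → ℝ) (C : Set V) : ℝ :=
  if C.Subsingleton then 1
  else if h : ∃ T : SimpleGraph C, IsMaxSpanTree (G.induce C) T (subWeight w C) then
    sInf (subWeight w C '' h.choose.edgeSet)
  else 1

/-- Quality measure of a cluster in a graph: `max(Out(C)) / min(MST(C))`. -/
def phi [Fintype V] (G : SimpleGraph V) (w : Sym2 V → ℝ) (C : Set V) : ℝ :=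
  maxOut G w C / minMST G w C

/-- Quality measure of a cluster in a tree: `max(Out(C)) / min(E(C))`. -/
def phiT (G : SimpleGraph V) (w : Sym2 V → ℝ) (C : Set V) : ℝ :=
  maxOut G w C / minIn G w C

/-- `𝒞` is a partition of `U ⊆ V` into `G`-connected parts. -/
def IsPartitionOn (G : SimpleGraph V) (U : Set V) (𝒞 : Set (Set V)) : Prop :=
  (∀ C ∈ 𝒞, C.Nonempty ∧ C ⊆ U ∧ (G.induce C).Connected) ∧
  (∀ C ∈ 𝒞, ∀ C' ∈ 𝒞, C ≠ C' → Disjoint C C') ∧ ⋃₀ 𝒞 = U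

/-- A `k`-clustering of a graph `G` on vertex set `V`. -/
def IsClustering (G : SimpleGraph V) (𝒞 : Set (Set V)) (k : ℕ) : Prop :=
  IsPartitionOn G Set.univ 𝒞 ∧ 𝒞.ncard = k

/-- Evaluation of a clustering of a graph (min-max quality measure, MST-based). -/
def eval [Fintype V] (G : SimpleGraph V) (w : Sym2 V → ℝ) (𝒞 : Set (Set V)) : ℝ :=
  sSup (phi G w '' 𝒞)

/-- Evaluation of a clustering of a tree. -/
def evalT (G : SimpleGraph V) (w : Sym2 V → ℝ) (𝒞 : Set (Set V)) : ℝ :=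
  sSup (phiT G w '' 𝒞)

/-- `𝒞` is an optimal `k`-clustering of `G`. -/
def IsOptimal [Fintype V] (G : SimpleGraph V) (w : Sym2 V → ℝ) (k : ℕ) (𝒞 : Set (Set V)) : Prop :=
  IsClustering G 𝒞 k ∧ ∀ 𝒟, IsClustering G 𝒟 k → eval G w 𝒞 ≤ eval G w 𝒟

/-- All edge weights lie in the open interval `(0,1)`. -/
def weightsOK (G : SimpleGraph V) (w : Sym2 V → ℝ) : Prop :=
  ∀ e ∈ G.edgeSet, 0 < w e ∧ w e < 1

/-- The set of connected components (as vertex sets) of a graph. -/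
def components (G : SimpleGraph V) : Set (Set V) :=
  {C | ∃ x : V, C = {y | G.Reachable x y}}

end Bal

/-!
Suppose no maximum spanning tree of `G` crosses `{A, A'}`. A maximum spanning tree of `G[C]` does,
with an edge `uv`; by the cut property a maximum spanning tree `T` of `G` has an edge leaving `A`
that is strictly heavier than `uv` (a tie would put `uv` in a maximum spanning tree), and it must
leave `C`. Hence `Φ(C) > 1`.

On the other hand, deleting the `k - 1` lightest edges of `T` leaves a forest with `k` components,
each of quality at most `1`: an edge leaving a component is outweighed by a deleted edge of `T`,
and by the cycle property every edge of a maximum spanning tree of a component outweighs some kept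
edge. This `k`-clustering would beat the optimal one.
-/

namespace SimpleGraph

variable {V : Type*} {G T : SimpleGraph V} {a b u v x y : V}

theorem Preconnected.exists_adj_mem_not_mem (hG : G.Preconnected) {S : Set V} (hx : x ∈ S)
    (hy : y ∉ S) : ∃ u v, G.Adj u v ∧ u ∈ S ∧ v ∉ S := by
  obtain ⟨p⟩ := hG x y
  obtain ⟨d, -, hd, hd'⟩ := p.exists_boundary_dart S hx hy
  exact ⟨_, _, d.adj, hd, hd'⟩

theorem IsTree.edgeSet_nonempty [Nontrivial V] (hT : T.IsTree) : T.edgeSet.Nonempty := by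
  obtain ⟨u⟩ := hT.connected.nonempty
  obtain ⟨v, huv⟩ := hT.connected.preconnected.exists_adj_of_nontrivial u
  exact ⟨s(u, v), huv⟩

theorem Reachable.deleteEdges_or (h : G.Reachable x y) :
    (G.deleteEdges {s(a, b)}).Reachable x y ∨ (G.deleteEdges {s(a, b)}).Reachable x a ∨
      (G.deleteEdges {s(a, b)}).Reachable x b := by
  obtain ⟨p⟩ := h
  induction p with
  | nil => exact .inl .rfl
  | @cons x z y hxz _ ih =>
    by_cases he : s(x, z) = s(a, b)
    · rcases Sym2.eq_iff.mp he with ⟨rfl, -⟩ | ⟨rfl, -⟩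
      · exact .inr (.inl .rfl)
      · exact .inr (.inr .rfl)
    · have hxz' : (G.deleteEdges {s(a, b)}).Adj x z := deleteEdges_adj.mpr ⟨hxz, he⟩
      exact ih.imp hxz'.reachable.trans (Or.imp hxz'.reachable.trans hxz'.reachable.trans)

theorem Reachable.deleteEdges_or_of_right (h : G.Reachable x a) :
    (G.deleteEdges {s(a, b)}).Reachable x a ∨ (G.deleteEdges {s(a, b)}).Reachable x b := by
  rcases h.deleteEdges_or (b := b) with h | h | h
  exacts [.inl h, .inl h, .inr h]

theorem setOf_reachable_eq_iff :
    {z | G.Reachable x z} = {z | G.Reachable y z} ↔ G.Reachable x y :=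
  ⟨fun h => (Set.ext_iff.mp h y).mpr .rfl,
    fun h => Set.ext fun _ => ⟨h.symm.trans, h.trans⟩⟩

theorem setOf_reachable_deleteEdges_eq (hab : G.Adj a b) (hax : ¬G.Reachable a x) :
    {y | (G.deleteEdges {s(a, b)}).Reachable x y} = {y | G.Reachable x y} := by
  ext y
  refine ⟨fun h => h.mono (deleteEdges_le _), fun hxy => ?_⟩
  rcases hxy.deleteEdges_or (a := a) (b := b) with h | h | h
  · exact h
  · exact absurd (h.mono (deleteEdges_le _)).symm hax
  · exact absurd (hab.reachable.trans (h.mono (deleteEdges_le _)).symm) hax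

theorem IsAcyclic.not_reachable_deleteEdges_of_mem_edges (hG : G.IsAcyclic) {P : G.Walk x y}
    (hP : P.IsPath) {e : Sym2 V} (he : e ∈ P.edges) : ¬(G.deleteEdges {e}).Reachable x y := by
  cases e with | h a b =>
  rw [reachable_deleteEdges_iff_exists_walk]
  rintro ⟨q, hq⟩
  have hPq : (⟨P, hP⟩ : G.Path x y) = q.toPath := (hG.subsingleton_path x y).elim _ _
  exact hq (q.edges_bypass_subset_edges (congrArg (·.val.edges) hPq ▸ he))

theorem edgeSet_deleteEdges_sup_edge (huv : u ≠ v) :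
    (G.deleteEdges {s(a, b)} ⊔ edge u v).edgeSet = insert s(u, v) (G.edgeSet \ {s(a, b)}) := by
  rw [edgeSet_sup, edgeSet_deleteEdges, edgeSet_edge_of_ne huv, Set.union_comm, Set.insert_eq]

theorem IsTree.deleteEdges_sup_edge (hT : T.IsTree)
    (huv : ¬(T.deleteEdges {s(a, b)}).Reachable u v) :
    (T.deleteEdges {s(a, b)} ⊔ edge u v).IsTree := by
  set H := T.deleteEdges {s(a, b)}
  have hne : u ≠ v := by rintro rfl; exact huv .rfl
  have hUV : (H ⊔ edge u v).Reachable u v :=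
    (sup_adj _ _ _ _).mpr (.inr ((edge_adj ..).mpr ⟨.inl ⟨rfl, rfl⟩, hne⟩)) |>.reachable
  have hAB : (H ⊔ edge u v).Reachable a b := by
    have lift {x y : V} (h : H.Reachable x y) : (H ⊔ edge u v).Reachable x y := h.mono le_sup_left
    rcases (hT.connected.preconnected u a).deleteEdges_or_of_right (b := b) with hu | hu <;>
      rcases (hT.connected.preconnected v a).deleteEdges_or_of_right (b := b) with hv | hv
    · exact absurd (hu.trans hv.symm) huv
    · exact (lift hu).symm.trans (hUV.trans (lift hv))
    · exact (lift hv).symm.trans (hUV.symm.trans (lift hu))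
    · exact absurd (hu.trans hv.symm) huv
  refine ⟨(connected_iff_exists_forall_reachable _).mpr ⟨a, fun x => ?_⟩,
    (hT.isAcyclic.anti (deleteEdges_le _)).sup_edge_of_not_reachable huv⟩
  rcases (hT.connected.preconnected x a).deleteEdges_or_of_right (b := b) with h | h
  · exact (h.mono le_sup_left).symm
  · exact hAB.trans (h.mono le_sup_left).symm

end SimpleGraph

namespace Bal

open SimpleGraph

variable {V : Type*} {G H T F : SimpleGraph V} {w : Sym2 V → ℝ} {a b p q x y : V}

theorem totalWeight_eq_sub_add [Fintype V] {H' : SimpleGraph V} {e f : Sym2 V}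
    (hE : H'.edgeSet = insert e (H.edgeSet \ {f})) (hf : f ∈ H.edgeSet) (he : e ∉ H.edgeSet) :
    totalWeight H' w = totalWeight H w - w f + w e := by
  simp only [totalWeight, ← Finset.sum_filter]
  have hfilter : Finset.univ.filter (· ∈ H'.edgeSet) =
      insert e ((Finset.univ.filter (· ∈ H.edgeSet)).erase f) := by
    ext; simp [hE, and_comm]
  rw [hfilter, Finset.sum_insert (by simp [he]), Finset.sum_erase_eq_sub (by simpa using hf)]
  ring

section Finite

variable [Fintype V]

theorem exists_isMaxSpanTree (hG : G.Connected) (w : Sym2 V → ℝ) :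
    ∃ T, IsMaxSpanTree G T w := by
  obtain ⟨T₀, hT₀G, hT₀⟩ := hG.exists_isTree_le
  obtain ⟨T, ⟨hTG, hT⟩, hmax⟩ := Set.exists_max_image {T | T ≤ G ∧ T.IsTree}
    (totalWeight · w) (Set.toFinite _) ⟨T₀, hT₀G, hT₀⟩
  exact ⟨T, hTG, hT, fun T' hT'G hT' => hmax T' ⟨hT'G, hT'⟩⟩

theorem IsMaxSpanTree.weight_le_of_not_reachable (hT : IsMaxSpanTree G T w) (hpq : G.Adj p q)
    (hab : T.Adj a b) (hsep : ¬(T.deleteEdges {s(a, b)}).Reachable p q) :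
    w s(p, q) ≤ w s(a, b) ∧
      (w s(p, q) = w s(a, b) → ∃ T', IsMaxSpanTree G T' w ∧ T'.Adj p q) := by
  obtain ⟨hTG, hTt, hTmax⟩ := hT
  by_cases hin : s(p, q) ∈ T.edgeSet
  · have hpq_ab : s(p, q) = s(a, b) := by
      by_contra hne
      exact hsep (deleteEdges_adj.mpr ⟨hin, hne⟩).reachable
    exact ⟨hpq_ab ▸ le_rfl, fun _ => ⟨T, ⟨hTG, hTt, hTmax⟩, hin⟩⟩
  set T' := T.deleteEdges {s(a, b)} ⊔ edge p q
  have hT' : T'.IsTree := hTt.deleteEdges_sup_edge hsep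
  have hT'G : T' ≤ G := sup_le ((deleteEdges_le _).trans hTG) ((edge_le_iff G).mpr (.inr hpq))
  have hwT' : totalWeight T' w = totalWeight T w - w s(a, b) + w s(p, q) :=
    totalWeight_eq_sub_add (edgeSet_deleteEdges_sup_edge hpq.ne) hab hin
  have hle := hTmax T' hT'G hT'
  refine ⟨by linarith, fun heq => ⟨T', ⟨hT'G, hT', fun T'' h h' => ?_⟩, ?_⟩⟩
  · linarith [hTmax T'' h h']
  · exact (sup_adj _ _ _ _).mpr (.inr ((edge_adj ..).mpr ⟨.inl ⟨rfl, rfl⟩, hpq.ne⟩))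

theorem IsMaxSpanTree.exists_adj_mem_not_mem_weight_le (hT : IsMaxSpanTree G T w)
    (hxy : G.Adj x y) {S : Set V} (hx : x ∈ S) (hy : y ∉ S) :
    ∃ a b, T.Adj a b ∧ a ∈ S ∧ b ∉ S ∧ w s(x, y) ≤ w s(a, b) ∧
      (w s(x, y) = w s(a, b) → ∃ T', IsMaxSpanTree G T' w ∧ T'.Adj x y) := by
  obtain ⟨P, hP⟩ := hT.2.1.connected.exists_isPath x y
  obtain ⟨d, hd, hdS, hdS'⟩ := P.exists_boundary_dart S hx hy
  have hsep := hT.2.1.isAcyclic.not_reachable_deleteEdges_of_mem_edges hP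
    (P.edges_eq_map_darts ▸ List.mem_map_of_mem hd)
  exact ⟨d.fst, d.snd, d.adj, hdS, hdS', hT.weight_le_of_not_reachable hxy d.adj hsep⟩

theorem IsMaxSpanTree.exists_adj_weight_le (hT : IsMaxSpanTree G T w) (hHG : H ≤ G)
    (hH : H.Connected) (hab : T.Adj a b) : ∃ x y, H.Adj x y ∧ w s(x, y) ≤ w s(a, b) := by
  have hb : ¬(T.deleteEdges {s(a, b)}).Reachable a b :=
    isAcyclic_iff_forall_adj_isBridge.mp hT.2.1.isAcyclic hab
  obtain ⟨x, y, hxy, hx, hy⟩ := hH.preconnected.exists_adj_mem_not_mem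
    (S := {z | (T.deleteEdges {s(a, b)}).Reachable a z}) .rfl hb
  exact ⟨x, y, hxy, (hT.weight_le_of_not_reachable (hHG hxy) hab fun h => hy (hx.trans h)).1⟩

end Finite

theorem isPartitionOn_components (H : SimpleGraph V) : IsPartitionOn H Set.univ (components H) := by
  refine ⟨?_, ?_, Set.eq_univ_of_forall fun x => ⟨_, ⟨x, rfl⟩, .rfl⟩⟩
  · rintro _ ⟨x, rfl⟩
    have hsupp : {y | H.Reachable x y} = (H.connectedComponentMk x).supp := by
      ext y
      simp [ConnectedComponent.eq, reachable_comm]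
    exact ⟨⟨x, .rfl⟩, Set.subset_univ _,
      hsupp ▸ (ConnectedComponent.maximal_connected_induce_supp _).prop⟩
  · rintro _ ⟨x, rfl⟩ _ ⟨y, rfl⟩ hne
    exact Set.disjoint_left.mpr fun z hxz hyz =>
      hne (setOf_reachable_eq_iff.mpr (hxz.trans hyz.symm))

theorem IsPartitionOn.mono {U : Set V} {𝒞 : Set (Set V)} (h : IsPartitionOn H U 𝒞)
    (hHG : H ≤ G) : IsPartitionOn G U 𝒞 :=
  ⟨fun C hC => ⟨(h.1 C hC).1, (h.1 C hC).2.1, (h.1 C hC).2.2.mono fun _ _ h => hHG h⟩, h.2⟩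

theorem IsPartitionOn.ncard_le [Finite V] {U : Set V} {𝒞 : Set (Set V)}
    (h : IsPartitionOn G U 𝒞) : 𝒞.ncard ≤ Nat.card V := by
  rw [← Nat.card_coe_set_eq]
  refine Nat.card_le_card_of_injective (fun C : 𝒞 => (h.1 C C.2).1.some)
    fun C D (hCD : (h.1 C C.2).1.some = (h.1 D D.2).1.some) => ?_
  by_contra hne
  exact Set.disjoint_left.mp (h.2.1 C C.2 D D.2 (Subtype.coe_ne_coe.mpr hne))
    (h.1 C C.2).1.some_mem (hCD ▸ (h.1 D D.2).1.some_mem)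

theorem components_eq_singleton_univ (hH : H.Connected) : components H = {Set.univ} := by
  obtain ⟨x₀⟩ := hH.nonempty
  ext C
  simp only [components, Set.mem_singleton_iff, Set.eq_univ_iff_forall]
  constructor
  · rintro ⟨x, rfl⟩
    exact hH.preconnected x
  · rintro hC
    exact ⟨x₀, (Set.eq_univ_of_forall hC).trans
      (Set.eq_univ_of_forall (hH.preconnected x₀)).symm⟩

theorem exists_adj_of_ncard_components_lt [Finite V] (h : (components H).ncard < Nat.card V) :
    ∃ x y, H.Adj x y := by
  by_contra! hno
  have hclass (x : V) : {y | H.Reachable x y} = {x} := by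
    ext y
    refine ⟨fun ⟨p⟩ => ?_, fun hy => hy ▸ .rfl⟩
    cases p with
    | nil => rfl
    | cons hadj _ => exact absurd hadj (hno _ _)
  have hsingle : components H = Set.range ({·}) := by
    ext C
    simp only [components, hclass, Set.mem_range, Set.mem_ofPred_eq, eq_comm]
  rw [hsingle, Set.ncard_range_of_injective Set.singleton_injective] at h
  exact h.false

theorem components_deleteEdges (hab : H.Adj a b) :
    components (H.deleteEdges {s(a, b)}) = insert {y | (H.deleteEdges {s(a, b)}).Reachable a y}
      (insert {y | (H.deleteEdges {s(a, b)}).Reachable b y}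
        (components H \ {{y | H.Reachable a y}})) := by
  ext D
  constructor
  · rintro ⟨x, rfl⟩
    by_cases hax : H.Reachable a x
    · rcases hax.symm.deleteEdges_or_of_right (b := b) with h | h
      · exact .inl (setOf_reachable_eq_iff.mpr h)
      · exact .inr (.inl (setOf_reachable_eq_iff.mpr h))
    · rw [setOf_reachable_deleteEdges_eq hab hax]
      exact .inr (.inr ⟨⟨x, rfl⟩, fun h => hax (setOf_reachable_eq_iff.mp h).symm⟩)
  · rintro (rfl | rfl | ⟨⟨x, rfl⟩, hxa⟩)
    · exact ⟨a, rfl⟩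
    · exact ⟨b, rfl⟩
    · refine ⟨x, (setOf_reachable_deleteEdges_eq hab fun hax => hxa ?_).symm⟩
      exact setOf_reachable_eq_iff.mpr hax.symm

theorem ncard_components_deleteEdges [Finite V] (hab : H.Adj a b) (hbr : H.IsBridge s(a, b)) :
    (components (H.deleteEdges {s(a, b)})).ncard = (components H).ncard + 1 := by
  have hb : {y | (H.deleteEdges {s(a, b)}).Reachable b y} ∉
      components H \ {{y | H.Reachable a y}} := by
    rintro ⟨⟨x, hx⟩, hxa⟩
    have hxb : H.Reachable x b := (Set.ext_iff.mp hx b).mp .rfl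
    exact hxa (hx.trans (setOf_reachable_eq_iff.mpr (hxb.trans hab.reachable.symm)))
  have ha : {y | (H.deleteEdges {s(a, b)}).Reachable a y} ∉
      insert {y | (H.deleteEdges {s(a, b)}).Reachable b y}
        (components H \ {{y | H.Reachable a y}}) := by
    rintro (h | ⟨⟨x, hx⟩, hxa⟩)
    · exact isBridge_iff.mp hbr (setOf_reachable_eq_iff.mp h)
    · exact hxa (hx.trans (setOf_reachable_eq_iff.mpr ((Set.ext_iff.mp hx a).mp .rfl)))
  have hpos : 0 < (components H).ncard := (Set.ncard_pos (Set.toFinite _)).mpr ⟨_, a, rfl⟩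
  rw [components_deleteEdges hab, Set.ncard_insert_of_notMem ha, Set.ncard_insert_of_notMem hb,
    Set.ncard_sdiff_singleton_of_mem (show _ ∈ components H from ⟨a, rfl⟩)]
  omega

theorem exists_le_ncard_components_eq [Finite V] (hT : T.IsTree) (w : Sym2 V → ℝ)
    {j : ℕ} (hj : 1 ≤ j) (hjV : j ≤ Nat.card V) :
    ∃ F ≤ T, (components F).ncard = j ∧
      ∀ e ∈ T.edgeSet \ F.edgeSet, ∀ f ∈ F.edgeSet, w e ≤ w f := by
  induction j, hj using Nat.le_induction with
  | base =>
    exact ⟨T, le_rfl, by rw [components_eq_singleton_univ hT.connected, Set.ncard_singleton],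
      fun _ he _ _ => absurd he.1 he.2⟩
  | succ j hj ih =>
    obtain ⟨F, hFT, hcard, hord⟩ := ih (by omega)
    obtain ⟨x, y, hxy⟩ := exists_adj_of_ncard_components_lt (H := F) (by omega)
    obtain ⟨f, hf, hfmin⟩ :=
      Set.exists_min_image F.edgeSet w (Set.toFinite _) ⟨s(x, y), hxy⟩
    cases f with | h a b =>
    have hbr : F.IsBridge s(a, b) := isAcyclic_iff_forall_adj_isBridge.mp (hT.isAcyclic.anti hFT) hf
    refine ⟨F.deleteEdges {s(a, b)}, (deleteEdges_le _).trans hFT,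
      by rw [ncard_components_deleteEdges hf hbr, hcard], ?_⟩
    rintro e ⟨heT, heF'⟩ f' hf'
    rw [edgeSet_deleteEdges] at hf' heF'
    by_cases heF : e ∈ F.edgeSet
    · obtain rfl : e = s(a, b) := by_contra fun hne => heF' ⟨heF, hne⟩
      exact hfmin f' hf'.1
    · exact hord e ⟨heT, heF⟩ f' hf'.1

section Quality

variable {C : Set V}

theorem maxOut_le {m : ℝ} (h : ∀ e ∈ outEdges G C, w e ≤ m) (hm : 0 ≤ m) :
    maxOut G w C ≤ m :=
  Real.sSup_le (by rintro _ ⟨e, he, rfl⟩; exact h e he) hm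

theorem maxOut_le_one (hw : weightsOK G w) : maxOut G w C ≤ 1 :=
  maxOut_le (fun e he => (hw e he.1).2.le) zero_le_one

theorem subWeight_pos (hw : weightsOK G w) {T : SimpleGraph C} (hT : T ≤ G.induce C)
    {e : Sym2 C} (he : e ∈ T.edgeSet) : 0 < subWeight w C e := by
  cases e with | h p q => exact (hw _ (hT he)).1

variable [Fintype V]

theorem le_maxOut {e : Sym2 V} (he : e ∈ outEdges G C) : w e ≤ maxOut G w C :=
  le_csSup (Set.toFinite _).bddAbove ⟨e, he, rfl⟩

theorem minMST_pos (hw : weightsOK G w) : 0 < minMST G w C := by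
  unfold minMST
  split_ifs with hC hT
  · exact one_pos
  · have : Nontrivial C := Set.nontrivial_coe_sort.mpr (Set.not_subsingleton_iff.mp hC)
    obtain ⟨e, he⟩ := hT.choose_spec.2.1.edgeSet_nonempty
    have hne : (subWeight w C '' hT.choose.edgeSet).Nonempty := ⟨_, e, he, rfl⟩
    obtain ⟨e', he', heq⟩ := hne.csInf_mem (Set.toFinite _)
    exact heq ▸ subWeight_pos hw hT.choose_spec.1 he'
  · exact one_pos

theorem exists_isMaxSpanTree_minMST_le (hC : C.Nontrivial) (hconn : (G.induce C).Connected) :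
    ∃ T, IsMaxSpanTree (G.induce C) T (subWeight w C) ∧
      ∀ e ∈ T.edgeSet, minMST G w C ≤ subWeight w C e := by
  have hex := exists_isMaxSpanTree hconn (subWeight w C)
  refine ⟨hex.choose, hex.choose_spec, fun e he => ?_⟩
  rw [minMST, if_neg hC.not_subsingleton, dif_pos hex]
  exact csInf_le (Set.toFinite _).bddBelow ⟨e, he, rfl⟩

theorem le_minMST {m : ℝ} (hm : m ≤ 1)
    (h : ∀ T, IsMaxSpanTree (G.induce C) T (subWeight w C) → ∀ e ∈ T.edgeSet,
      m ≤ subWeight w C e) : m ≤ minMST G w C := by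
  unfold minMST
  split_ifs with hC hT
  · exact hm
  · have : Nontrivial C := Set.nontrivial_coe_sort.mpr (Set.not_subsingleton_iff.mp hC)
    obtain ⟨e, he⟩ := hT.choose_spec.2.1.edgeSet_nonempty
    exact le_csInf ⟨_, e, he, rfl⟩ (by rintro _ ⟨e, he, rfl⟩; exact h _ hT.choose_spec e he)
  · exact hm

theorem one_lt_phi_of_forall_not_adj (hw : weightsOK G w) (hG : G.Connected)
    (hconn : (G.induce C).Connected) (hC : C.Nontrivial) {A A' : Set V} (hA : A.Nonempty)
    (hA' : A'.Nonempty) (hdisj : Disjoint A A') (hunion : A ∪ A' = C)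
    (h : ∀ T, IsMaxSpanTree G T w → ∀ a ∈ A, ∀ a' ∈ A', ¬T.Adj a a') :
    1 < phi G w C := by
  obtain ⟨T, hT⟩ := exists_isMaxSpanTree hG w
  obtain ⟨T_C, hT_C, hmin⟩ := exists_isMaxSpanTree_minMST_le (w := w) hC hconn
  obtain ⟨a₀, ha₀⟩ := hA
  obtain ⟨a₀', ha₀'⟩ := hA'
  obtain ⟨u, v, huv, huA, hvA⟩ := hT_C.2.1.connected.preconnected.exists_adj_mem_not_mem
    (S := {z : C | (z : V) ∈ A}) (x := ⟨a₀, hunion ▸ .inl ha₀⟩)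
    (y := ⟨a₀', hunion ▸ .inr ha₀'⟩)
    ha₀ (Set.disjoint_right.mp hdisj ha₀')
  have hvA' : (v : V) ∈ A' := ((hunion ▸ v.2 : (v : V) ∈ A ∪ A').resolve_left hvA)
  obtain ⟨x, y, hxy, hxA, hyA, hle, htie⟩ :=
    hT.exists_adj_mem_not_mem_weight_le (hT_C.1 huv) huA hvA
  have hyC : y ∉ C := hunion ▸ fun hy => hy.elim hyA fun hyA' => h T hT x hxA y hyA' hxy
  have hlt : w s(↑u, ↑v) < w s(x, y) := hle.lt_of_ne fun heq =>
    let ⟨T', hT', hadj⟩ := htie heq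
    h T' hT' _ huA _ hvA' hadj
  rw [phi, one_lt_div (minMST_pos hw)]
  calc minMST G w C ≤ subWeight w C s(u, v) := hmin _ huv
    _ < w s(x, y) := hlt
    _ ≤ maxOut G w C := le_maxOut ⟨hT.1 hxy, x, y, rfl, hunion ▸ .inl hxA, hyC⟩

theorem phi_le_one_of_mem_components (hw : weightsOK G w) (hT : IsMaxSpanTree G T w)
    (hFT : F ≤ T) (hcut : ∀ e ∈ T.edgeSet \ F.edgeSet, ∀ f ∈ F.edgeSet, w e ≤ w f)
    {D : Set V} (hD : D ∈ components F) : phi G w D ≤ 1 := by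
  have hDconn := ((isPartitionOn_components F).1 D hD).2.2
  have hstay : ∀ a b, F.Adj a b → a ∈ D → b ∈ D := by
    obtain ⟨x, rfl⟩ := hD
    exact fun a b hab ha => ha.trans hab.reachable
  have hout : ∀ e ∈ outEdges G D, ∀ f ∈ F.edgeSet, w e ≤ w f := by
    rintro _ ⟨he, p, q, rfl, hp, hq⟩ f hf
    obtain ⟨a, b, hab, ha, hb, hle, -⟩ := hT.exists_adj_mem_not_mem_weight_le he hp hq
    exact hle.trans (hcut _ ⟨hab, fun habF => hb (hstay a b habF ha)⟩ f hf)
  have hle : maxOut G w D ≤ minMST G w D := by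
    refine le_minMST (maxOut_le_one hw) fun T_D hT_D t ht => ?_
    cases t with | h p q =>
    obtain ⟨p', q', hpq', hwle⟩ :=
      hT_D.exists_adj_weight_le (fun _ _ h => hT.1 (hFT h)) hDconn ht
    exact maxOut_le (fun e he => (hout e he _ hpq').trans hwle)
      (subWeight_pos hw hT_D.1 ht).le
  rw [phi, div_le_one (minMST_pos hw)]
  exact hle

end Quality

/-- every bipartition of a non-singleton optimal cluster has a crossing edge
in some maximum spanning tree of `G`. -/
theorem statement1 {V : Type*} [Fintype V] (G : SimpleGraph V) (w : Sym2 V → ℝ)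
    (hconn : G.Connected) (hw : weightsOK G w) (k : ℕ) (𝒞 : Set (Set V))
    (hopt : IsOptimal G w k 𝒞) (C : Set V) (hC : C ∈ 𝒞) (hCnt : C.Nontrivial)
    (A A' : Set V) (hA : A.Nonempty) (hA' : A'.Nonempty) (hdisj : Disjoint A A')
    (hunion : A ∪ A' = C) :
    ∃ T : SimpleGraph V, IsMaxSpanTree G T w ∧ ∃ a ∈ A, ∃ a' ∈ A', T.Adj a a' := by
  by_contra! hno
  obtain ⟨⟨hpart, hk⟩, hmin⟩ := hopt
  have hphiC : 1 < phi G w C :=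
    one_lt_phi_of_forall_not_adj hw hconn (hpart.1 C hC).2.2 hCnt hA hA' hdisj hunion hno
  obtain ⟨T, hT⟩ := exists_isMaxSpanTree hconn w
  obtain ⟨F, hFT, hFk, hcut⟩ := exists_le_ncard_components_eq hT.2.1 w (j := k)
    (hk ▸ (Set.ncard_pos (Set.toFinite _)).mpr ⟨C, hC⟩) (hk ▸ hpart.ncard_le)
  have hclus : IsClustering G (components F) k :=
    ⟨(isPartitionOn_components F).mono (hFT.trans hT.1), hFk⟩
  have heval𝒞 : 1 < eval G w 𝒞 :=
    hphiC.trans_le (le_csSup (Set.toFinite _).bddAbove ⟨C, hC, rfl⟩)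
  have hevalF : eval G w (components F) ≤ 1 := by
    refine Real.sSup_le ?_ zero_le_one
    rintro _ ⟨D, hD, rfl⟩
    exact phi_le_one_of_mem_components hw hT hFT hcut hD
  linarith [hmin _ hclus]

end Bal
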